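/- arXiv:1702.06203 — 2 statements merged into one kernel-verified Lean document; each statement's English description precedes it below -/
import Mathlib

section
/- Let T be a forest with spanning forest F (a subgraph of T on the same vertex set that is a forest), let S be a subset of vertices of T, and let 𝓕 = T \ E(F) be the graph obtained by deleting the edges of F. Then the sum over v in S of the degree of v in 𝓕 equals ω(T \ [S,F]) − ω(T) + e_𝓕(S), where T \ [S,F] is obtained from T by removing all edges incident to vertices of S except edges of F, ω denotes number of connected components, and e_𝓕(S) is the number of edges of 𝓕 with both ends in S. -/
open SimpleGraph

variable {V : Type*}

/-- Number of connected components. -/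
noncomputable def numComponents (G : SimpleGraph V) : ℕ :=
  Nat.card G.ConnectedComponent

/-- Degree of a vertex. -/
noncomputable def deg (G : SimpleGraph V) (v : V) : ℕ := (G.neighborSet v).ncard

/-- Number of edges of `G` with both ends in `S`. -/
noncomputable def edgesIn (G : SimpleGraph V) (S : Set V) : ℕ :=
  {e ∈ G.edgeSet | ∀ v ∈ e, v ∈ S}.ncard

/-- `G \ [S, F]`: remove all edges incident to `S` except edges of `F`. -/
def delExcept (G F : SimpleGraph V) (S : Set V) : SimpleGraph V where
  Adj x y := G.Adj x y ∧ (F.Adj x y ∨ (x ∉ S ∧ y ∉ S))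
  symm := by
    constructor
    rintro x y ⟨h1, h2⟩
    exact ⟨h1.symm, h2.elim (fun hf => Or.inl hf.symm) (fun hc => Or.inr ⟨hc.2, hc.1⟩)⟩
  loopless := ⟨fun x h => G.loopless.irrefl x h.1⟩

/-- `m`-tree-connected: contains `m` pairwise edge-disjoint spanning trees. -/
def IsTreeConnected (m : ℕ) (G : SimpleGraph V) : Prop :=
  ∃ T : Fin m → SimpleGraph V,
    (∀ i, T i ≤ G) ∧ (∀ i, (T i).Connected ∧ (T i).IsAcyclic) ∧
    ∀ i j, i ≠ j → Disjoint (T i).edgeSet (T j).edgeSet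

/-- Two vertices lie in a common `m`-tree-connected induced subgraph, i.e. in the same
`m`-tree-connected component. -/
def sameTC (m : ℕ) (G : SimpleGraph V) (u v : V) : Prop :=
  ∃ W : Set V, u ∈ W ∧ v ∈ W ∧ IsTreeConnected m (G.induce W)

/-- Tree-connectivity measure `Ω_m`. -/
noncomputable def Omega (m : ℕ) (G : SimpleGraph V) : ℝ :=
  (Nat.card (Quot (sameTC m G)) : ℝ) -
    ({e ∈ G.edgeSet | ∃ x y, e = s(x, y) ∧ ¬ sameTC m G x y}.ncard : ℝ) / m

/-- `k`-edge-connected. -/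
def EdgeConnected (k : ℕ) (G : SimpleGraph V) : Prop :=
  ∀ E' : Set (Sym2 V), E'.ncard < k → (G.deleteEdges E').Connected

/-- Contraction of a vertex set to a single vertex. -/
noncomputable def vrep (X : Set V) (v : V) : Option {v : V // v ∉ X} :=
  @dite _ (v ∈ X) (Classical.dec _) (fun _ => none) (fun h => some ⟨v, h⟩)

noncomputable def contract (G : SimpleGraph V) (X : Set V) :
    SimpleGraph (Option {v : V // v ∉ X}) where
  Adj a b := a ≠ b ∧ ∃ x y, G.Adj x y ∧ vrep X x = a ∧ vrep X y = b
  symm := by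
    constructor
    rintro a b ⟨hne, x, y, h, hx, hy⟩
    exact ⟨hne.symm, y, x, h.symm, hy, hx⟩
  loopless := ⟨fun a h => h.1 rfl⟩

/-- Contraction of every component of `F`. -/
def contractComponents (G F : SimpleGraph V) : SimpleGraph F.ConnectedComponent where
  Adj a b := a ≠ b ∧ ∃ x y, G.Adj x y ∧ F.connectedComponentMk x = a ∧ F.connectedComponentMk y = b
  symm := by
    constructor
    rintro a b ⟨hne, x, y, h, hx, hy⟩
    exact ⟨hne.symm, y, x, h.symm, hy, hx⟩
  loopless := ⟨fun a h => h.1 rfl⟩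

/-- Number of edges of `G` incident to `v` joining different components of `F`. -/
noncomputable def degSep (G F : SimpleGraph V) (v : V) : ℕ :=
  {w | G.Adj v w ∧ ¬ F.Reachable v w}.ncard

/-- Number of edges of `G` with both ends in `S` joining different components of `F`. -/
noncomputable def edgesInSep (G F : SimpleGraph V) (S : Set V) : ℕ :=
  {e : Sym2 V | ∃ x y, e = s(x, y) ∧ G.Adj x y ∧ x ∈ S ∧ y ∈ S ∧ ¬ F.Reachable x y}.ncard

/-- `K_{1,n}`-free. -/
def K1nFree (n : ℕ) (G : SimpleGraph V) : Prop :=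
  ¬ ∃ (c : V) (A : Finset V), A.card = n ∧ (∀ a ∈ A, G.Adj c a) ∧
      ∀ a ∈ A, ∀ b ∈ A, a ≠ b → ¬ G.Adj a b

/-- A spanning closed walk meeting each vertex `v` at most `f v` times. -/
def HasClosedSpanningWalk [DecidableEq V] (G : SimpleGraph V) (f : V → ℕ) : Prop :=
  ∃ (u : V) (w : G.Walk u u), (∀ v, v ∈ w.support) ∧ ∀ v, w.support.tail.count v ≤ f v


section AuxStmt0
variable {V : Type*}

lemma acyclic_mono' {G H : SimpleGraph V} (h : H ≤ G) (hG : G.IsAcyclic) : H.IsAcyclic :=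
  fun _ c hc => hG (c.mapLe h) (hc.mapLe h)

lemma reach_del_tri {G : SimpleGraph V} (u v : V) {x y : V} (p : G.Walk x y) :
    (G.deleteEdges {s(u,v)}).Reachable x y
    ∨ ((G.deleteEdges {s(u,v)}).Reachable x u ∧ (G.deleteEdges {s(u,v)}).Reachable v y)
    ∨ ((G.deleteEdges {s(u,v)}).Reachable x v ∧ (G.deleteEdges {s(u,v)}).Reachable u y) := by
  set G' := G.deleteEdges {s(u,v)} with hG'
  induction p with
  | nil => exact Or.inl (Reachable.refl _)
  | @cons a b c h q ih =>
    by_cases he : s(a, b) = s(u, v)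
    · rw [Sym2.eq_iff] at he
      rcases he with ⟨ha, hb⟩ | ⟨ha, hb⟩
      · subst ha; subst hb
        rcases ih with h1 | ⟨h1, h2⟩ | ⟨h1, h2⟩
        · exact Or.inr (Or.inl ⟨Reachable.refl _, h1⟩)
        · exact Or.inl (h1.symm.trans h2)
        · exact Or.inl h2
      · subst ha; subst hb
        rcases ih with h1 | ⟨h1, h2⟩ | ⟨h1, h2⟩
        · exact Or.inr (Or.inr ⟨Reachable.refl _, h1⟩)
        · exact Or.inl h2
        · exact Or.inl (h1.symm.trans h2)
    · have hadj : G'.Adj a b := by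
        rw [hG']
        simp only [deleteEdges_adj, Set.mem_singleton_iff]
        exact ⟨h, he⟩
      rcases ih with h1 | ⟨h1, h2⟩ | ⟨h1, h2⟩
      · exact Or.inl (hadj.reachable.trans h1)
      · exact Or.inr (Or.inl ⟨hadj.reachable.trans h1, h2⟩)
      · exact Or.inr (Or.inr ⟨hadj.reachable.trans h1, h2⟩)

lemma reach_del_or {G : SimpleGraph V} {u v x : V} (hr : G.Reachable x u) :
    (G.deleteEdges {s(u,v)}).Reachable x u ∨ (G.deleteEdges {s(u,v)}).Reachable x v := by
  obtain ⟨p⟩ := hr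
  rcases reach_del_tri u v p with h1 | ⟨h1, h2⟩ | ⟨h1, h2⟩
  · exact Or.inl h1
  · exact Or.inl h1
  · exact Or.inr h1

lemma reach_del_of_not_reach {G : SimpleGraph V} {u v x y : V}
    (hx : ¬ G.Reachable x u) (hr : G.Reachable x y) :
    (G.deleteEdges {s(u,v)}).Reachable x y := by
  classical
  obtain ⟨p⟩ := hr
  by_cases he : s(u, v) ∈ p.edges
  · exact absurd ⟨p.takeUntil u (p.fst_mem_support_of_mem_edges he)⟩ hx
  · exact ⟨p.toDeleteEdges {s(u,v)} (fun e hep => by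
      simp only [Set.mem_singleton_iff]; rintro rfl; exact he hep)⟩

lemma card_cc_deleteEdge [Fintype V] {G : SimpleGraph V} {u v : V} (h : G.Adj u v)
    (hb : ¬ (G.deleteEdges {s(u,v)}).Reachable u v) :
    Nat.card (G.deleteEdges {s(u,v)}).ConnectedComponent
      = Nat.card G.ConnectedComponent + 1 := by
  classical
  set G' := G.deleteEdges {s(u,v)} with hG'
  have hle : G' ≤ G := deleteEdges_le _
  haveI : Fintype G'.ConnectedComponent := Fintype.ofFinite _
  haveI : Fintype G.ConnectedComponent := Fintype.ofFinite _
  set π : G'.ConnectedComponent → G.ConnectedComponent :=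
    ConnectedComponent.map (Hom.ofLE hle) with hπdef
  have hπ : ∀ x : V, π (G'.connectedComponentMk x) = G.connectedComponentMk x :=
    fun x => rfl
  have key : ∀ b : G.ConnectedComponent,
      (Finset.univ.filter (fun a => π a = b)).card
        = if b = G.connectedComponentMk u then 2 else 1 := by
    intro b
    obtain ⟨x, rfl⟩ : ∃ x, G.connectedComponentMk x = b := b.exists_rep
    by_cases hbu : G.connectedComponentMk x = G.connectedComponentMk u
    · rw [if_pos hbu]
      have hset : (Finset.univ.filter (fun a => π a = G.connectedComponentMk x))
          = {G'.connectedComponentMk u, G'.connectedComponentMk v} := by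
        ext a
        simp only [Finset.mem_filter, Finset.mem_univ, true_and, Finset.mem_insert,
          Finset.mem_singleton]
        constructor
        · intro ha
          obtain ⟨y, rfl⟩ : ∃ y, G'.connectedComponentMk y = a := a.exists_rep
          rw [hπ] at ha
          have hyu : G.Reachable y u :=
            (ConnectedComponent.eq.mp ha).trans (ConnectedComponent.eq.mp hbu)
          rcases reach_del_or (v := v) hyu with h1 | h1
          · exact Or.inl (ConnectedComponent.eq.mpr h1)
          · exact Or.inr (ConnectedComponent.eq.mpr h1)
        · rintro (rfl | rfl)
          · rw [hπ]; exact hbu.symm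
          · rw [hπ]
            exact (ConnectedComponent.eq.mpr h.reachable.symm).trans hbu.symm
      rw [hset]
      rw [Finset.card_insert_of_notMem, Finset.card_singleton]
      simp only [Finset.mem_singleton]
      intro hc
      exact hb (ConnectedComponent.eq.mp hc)
    · rw [if_neg hbu]
      rw [Finset.card_eq_one]
      refine ⟨G'.connectedComponentMk x, ?_⟩
      rw [Finset.eq_singleton_iff_unique_mem]
      refine ⟨by simp [hπ], ?_⟩
      intro a ha
      simp only [Finset.mem_filter, Finset.mem_univ, true_and] at ha
      obtain ⟨y, rfl⟩ : ∃ y, G'.connectedComponentMk y = a := a.exists_rep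
      rw [hπ] at ha
      have hyx : G.Reachable y x := ConnectedComponent.eq.mp ha
      have hyu : ¬ G.Reachable y u := fun hr =>
        hbu ((ConnectedComponent.eq.mpr hyx.symm).trans (ConnectedComponent.eq.mpr hr))
      exact ConnectedComponent.eq.mpr (reach_del_of_not_reach (v := v) hyu hyx)
  rw [Nat.card_eq_fintype_card, Nat.card_eq_fintype_card, ← Finset.card_univ,
    ← Finset.card_univ,
    Finset.card_eq_sum_card_fiberwise (f := π) (t := Finset.univ) (fun x _ => Finset.mem_univ _)]
  simp_rw [key]
  have h2eq : ∀ b : G.ConnectedComponent,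
      (if b = G.connectedComponentMk u then 2 else 1)
        = 1 + if b = G.connectedComponentMk u then 1 else 0 := by
    intro b; split <;> rfl
  simp_rw [h2eq]
  rw [Finset.sum_add_distrib, Finset.sum_const, Finset.sum_ite_eq']
  simp [Finset.card_univ]

lemma forest_count [Fintype V] :
    ∀ (n : ℕ) (G : SimpleGraph V), G.IsAcyclic → G.edgeSet.ncard = n →
      Nat.card G.ConnectedComponent + n = Fintype.card V := by
  intro n
  induction n with
  | zero =>
    intro G hG h0
    have hE : G.edgeSet = ∅ := (Set.ncard_eq_zero (Set.toFinite _)).mp h0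
    have hbot : G = ⊥ := edgeSet_eq_empty.mp hE
    subst hbot
    rw [add_zero, ← Nat.card_eq_fintype_card]
    exact (Nat.card_eq_of_bijective (⊥ : SimpleGraph V).connectedComponentMk
      ⟨fun a b hab => reachable_bot.mp (ConnectedComponent.eq.mp hab),
       fun c => c.exists_rep⟩).symm
  | succ n ih =>
    intro G hG hcard
    obtain ⟨e, he⟩ : G.edgeSet.Nonempty := Set.nonempty_of_ncard_ne_zero (by omega)
    induction e using Sym2.ind with
    | _ u v =>
    rw [mem_edgeSet] at he
    have hb : ¬ (G.deleteEdges {s(u,v)}).Reachable u v :=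
      ((isAcyclic_iff_forall_adj_isBridge.mp hG) he)
    have hG' : (G.deleteEdges {s(u,v)}).IsAcyclic := acyclic_mono' (deleteEdges_le _) hG
    have hcard' : (G.deleteEdges {s(u,v)}).edgeSet.ncard = n := by
      rw [edgeSet_deleteEdges]
      rw [Set.ncard_diff_singleton_of_mem ((G.mem_edgeSet).mpr he)]
      omega
    have hih := ih _ hG' hcard'
    rw [card_cc_deleteEdge he hb] at hih
    omega

lemma sum_deg_eq [Fintype V] (G : SimpleGraph V) (S : Finset V) :
    ∑ v ∈ S, deg G v
      = {e ∈ G.edgeSet | ∃ x ∈ e, x ∈ S}.ncard + edgesIn G ↑S := by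
  classical
  have step1 : ∀ v, deg G v = (G.edgeFinset.filter (fun e => v ∈ e)).card := by
    intro v
    rw [deg, Set.ncard_eq_toFinset_card', ← incidenceFinset_eq_filter,
      card_incidenceFinset_eq_degree, degree, neighborFinset_def]
  calc ∑ v ∈ S, deg G v
      = ∑ v ∈ S, ∑ e ∈ G.edgeFinset, (if v ∈ e then 1 else 0) := by
        simp_rw [step1, Finset.card_filter]
    _ = ∑ e ∈ G.edgeFinset, ∑ v ∈ S, (if v ∈ e then 1 else 0) := Finset.sum_comm
    _ = ∑ e ∈ G.edgeFinset,
          ((if ∃ x ∈ e, x ∈ S then 1 else 0) + (if ∀ x ∈ e, x ∈ S then 1 else 0)) := by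
        refine Finset.sum_congr rfl (fun e he => ?_)
        rw [mem_edgeFinset] at he
        induction e using Sym2.ind with
        | _ a b =>
          have hab : a ≠ b := (G.mem_edgeSet.mp he).ne
          have hsplit : ∀ w : V, (if w ∈ s(a,b) then (1:ℕ) else 0)
              = (if w = a then 1 else 0) + (if w = b then 1 else 0) := by
            intro w
            by_cases h1 : w = a <;> by_cases h2 : w = b
            · exact absurd (h1 ▸ h2) hab
            all_goals simp [h1, h2, hab, hab.symm, Sym2.mem_iff]
          simp_rw [hsplit]
          rw [Finset.sum_add_distrib, Finset.sum_ite_eq' S a (fun _ => 1),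
            Finset.sum_ite_eq' S b (fun _ => 1)]
          by_cases ha : a ∈ S <;> by_cases hb : b ∈ S <;>
            simp [ha, hb, hab, Sym2.mem_iff]
    _ = (G.edgeFinset.filter (fun e => ∃ x ∈ e, x ∈ S)).card
          + (G.edgeFinset.filter (fun e => ∀ x ∈ e, x ∈ S)).card := by
        rw [Finset.sum_add_distrib, Finset.card_filter, Finset.card_filter]
    _ = {e ∈ G.edgeSet | ∃ x ∈ e, x ∈ S}.ncard + edgesIn G ↑S := by
        rw [edgesIn]
        congr 1
        · rw [show {e ∈ G.edgeSet | ∃ x ∈ e, x ∈ S}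
              = ↑(G.edgeFinset.filter (fun e => ∃ x ∈ e, x ∈ S)) by
            ext e; simp [mem_edgeFinset]]
          exact (Set.ncard_coe_finset _).symm
        · rw [show {e ∈ G.edgeSet | ∀ v ∈ e, v ∈ (↑S : Set V)}
              = ↑(G.edgeFinset.filter (fun e => ∀ x ∈ e, x ∈ S)) by
            ext e; simp [mem_edgeFinset]]
          exact (Set.ncard_coe_finset _).symm

lemma delExcept_adj {G F : SimpleGraph V} {S : Set V} {x y : V} :
    (delExcept G F S).Adj x y ↔ G.Adj x y ∧ (F.Adj x y ∨ (x ∉ S ∧ y ∉ S)) := Iff.rfl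

end AuxStmt0

/-- For a forest `T` with spanning forest `F ≤ T`, with `𝓕 = T \ E(F)`,
`Σ_{v∈S} d_𝓕(v) = ω(T \ [S,F]) − ω(T) + e_𝓕(S)`. -/
theorem stmt_0 {V : Type*} [Fintype V] (T F : SimpleGraph V)
    (hT : T.IsAcyclic) (hFT : F ≤ T) (hF : F.IsAcyclic) (S : Finset V) :
    (∑ v ∈ S, deg (T \ F) v) + numComponents T
      = numComponents (delExcept T F (↑S)) + edgesIn (T \ F) (↑S) := by
  classical
  have hdel_le : delExcept T F ↑S ≤ T := fun x y h => h.1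
  have hdel_ac : (delExcept T F ↑S).IsAcyclic := acyclic_mono' hdel_le hT
  set R : Set (Sym2 V) := {e ∈ (T \ F).edgeSet | ∃ x ∈ e, x ∈ S} with hR
  have hRE : R ⊆ T.edgeSet := by
    intro e he
    have h1 := he.1
    rw [edgeSet_sdiff] at h1
    exact h1.1
  have hEdel : (delExcept T F ↑S).edgeSet = T.edgeSet \ R := by
    ext e
    induction e using Sym2.ind with
    | _ x y =>
      simp only [mem_edgeSet, Set.mem_diff, hR, Set.mem_setOf_eq, delExcept_adj,
        sdiff_adj, Sym2.mem_iff, Finset.mem_coe]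
      constructor
      · rintro ⟨hT1, h2⟩
        refine ⟨hT1, ?_⟩
        rintro ⟨⟨-, hnF⟩, z, hz, hzS⟩
        rcases h2 with hF | ⟨hx, hy⟩
        · exact hnF hF
        · rcases hz with rfl | rfl
          · exact hx hzS
          · exact hy hzS
      · rintro ⟨hT1, h2⟩
        refine ⟨hT1, ?_⟩
        by_cases hF : F.Adj x y
        · exact Or.inl hF
        · refine Or.inr ⟨fun hx => h2 ⟨⟨hT1, hF⟩, x, Or.inl rfl, hx⟩,
            fun hy => h2 ⟨⟨hT1, hF⟩, y, Or.inr rfl, hy⟩⟩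
  have h1 := forest_count T.edgeSet.ncard T hT rfl
  have h2 := forest_count (delExcept T F ↑S).edgeSet.ncard (delExcept T F ↑S) hdel_ac rfl
  have h3 : (delExcept T F ↑S).edgeSet.ncard = T.edgeSet.ncard - R.ncard := by
    rw [hEdel, Set.ncard_diff hRE (Set.toFinite _)]
  have h4 : R.ncard ≤ T.edgeSet.ncard := Set.ncard_le_ncard hRE (Set.toFinite _)
  have h5 := sum_deg_eq (T \ F) S
  rw [← hR] at h5
  unfold numComponents
  omega
end

section
/- Let G be a graph with spanning forest F, let S be a subset of vertices, and suppose every non-trivial component of F (i.e., every component with at least one edge) contains at least c vertices, where c ≥ 2. Then ω(G \ [S,F]) ≤ ω(G \ S) + |{v ∈ S : d_F(v) = 0}| + e_F(S)/(c−1), where G \ [S,F] is obtained from G by removing all edges incident to vertices of S except edges of F, and G \ S is obtained by deleting the vertices of S. -/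
open SimpleGraph

variable {V : Type*}

section Helpers

variable {V : Type*}

private lemma reachable_induce_of_walk {G : SimpleGraph V} {s : Set V} {a b : V}
    (p : G.Walk a b) (hp : ∀ u ∈ p.support, u ∈ s) (ha : a ∈ s) (hb : b ∈ s) :
    (G.induce s).Reachable ⟨a, ha⟩ ⟨b, hb⟩ := by
  induction p with
  | nil => exact Reachable.refl _
  | @cons a c b h q ih =>
    have hc : c ∈ s := hp c (by simp)
    have hadj : (G.induce s).Adj ⟨a, ha⟩ ⟨c, hc⟩ := h
    exact hadj.reachable.trans (ih (fun u hu => hp u (by simp [hu])) hc hb)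

private lemma isAcyclic_induce {G : SimpleGraph V} (h : G.IsAcyclic) (s : Set V) :
    (G.induce s).IsAcyclic := by
  intro v c hc
  exact h (c.map (SimpleGraph.Embedding.induce s).toHom)
    ((SimpleGraph.Walk.map_isCycle_iff_of_injective Subtype.val_injective).mpr hc)

/-- In an acyclic graph on a finite vertex type, the number of vertices of the component of `v`
equals the number of edges inside that component plus one. -/
private lemma comp_card_eq_edges_add_one (F : SimpleGraph V) [Fintype V] (hFa : F.IsAcyclic)
    (v : V) :
    {u | F.Reachable v u}.ncard =
      {e ∈ F.edgeSet | ∀ x ∈ e, F.Reachable v x}.ncard + 1 := by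
  classical
  set W : Set V := {u | F.Reachable v u} with hW
  haveI : Fintype W := Fintype.ofFinite _
  haveI : Fintype (F.induce W).edgeSet := Fintype.ofFinite _
  have hconn : (F.induce W).Connected := by
    haveI : Nonempty W := ⟨⟨v, Reachable.refl v⟩⟩
    refine ⟨fun a b => ?_⟩
    obtain ⟨p⟩ := (a.2 : F.Reachable v a.1).symm.trans (b.2 : F.Reachable v b.1)
    have hsupp : ∀ u ∈ p.support, u ∈ W := fun u hu =>
      (a.2 : F.Reachable v a.1).trans ⟨p.takeUntil u hu⟩
    exact reachable_induce_of_walk p hsupp a.2 b.2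
  have htree : (F.induce W).IsTree := ⟨hconn, isAcyclic_induce hFa W⟩
  have hcard := htree.card_edgeFinset
  have himg : {e ∈ F.edgeSet | ∀ x ∈ e, F.Reachable v x} =
      Sym2.map (Subtype.val : W → V) '' (F.induce W).edgeSet := by
    ext e
    constructor
    · intro ⟨he, hmem⟩
      induction e with
      | _ x y =>
        have hx : x ∈ W := hmem x (by simp)
        have hy : y ∈ W := hmem y (by simp)
        exact ⟨s(⟨x, hx⟩, ⟨y, hy⟩), by exact he, by simp⟩
    · rintro ⟨e', he', rfl⟩
      induction e' with
      | _ x y =>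
        have hadj : F.Adj x.1 y.1 := he'
        refine ⟨by simpa using hadj, ?_⟩
        intro z hz
        simp only [Sym2.map_pair_eq, Sym2.mem_iff] at hz
        rcases hz with rfl | rfl
        · exact x.2
        · exact y.2
  rw [himg, Set.ncard_image_of_injective _ (Sym2.map.injective Subtype.val_injective)]
  have h1 : (F.induce W).edgeSet.ncard = (F.induce W).edgeFinset.card := by
    rw [SimpleGraph.edgeFinset_card, ← Nat.card_coe_set_eq, Nat.card_eq_fintype_card]
  have h2 : W.ncard = Fintype.card W := by
    rw [← Nat.card_coe_set_eq, Nat.card_eq_fintype_card]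
  rw [h1, h2, hcard]

end Helpers


/-- If every non-trivial component of the spanning forest `F` of `G` has at
least `c ≥ 2` vertices, then
`ω(G \ [S,F]) ≤ ω(G \ S) + |{v ∈ S : d_F(v) = 0}| + e_F(S)/(c−1)`. -/
theorem stmt_1 {V : Type*} [Fintype V] (G F : SimpleGraph V)
    (hFG : F ≤ G) (hFa : F.IsAcyclic) (c : ℕ) (hc : 2 ≤ c)
    (hcomp : ∀ v w : V, F.Adj v w → c ≤ {u | F.Reachable v u}.ncard)
    (S : Set V) :
    (numComponents (delExcept G F S) : ℝ) ≤
      (numComponents (G.induce Sᶜ) : ℝ) + ({v ∈ S | deg F v = 0}.ncard : ℝ)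
        + (edgesIn F S : ℝ) / ((c : ℝ) - 1) := by
  classical
  set D := delExcept G F S with hDdef
  have hFD : F ≤ D := fun {x y} h => (show (delExcept G F S).Adj x y from ⟨hFG h, Or.inl h⟩)
  haveI : Fintype D.ConnectedComponent := Fintype.ofFinite _
  haveI : Fintype (G.induce Sᶜ).ConnectedComponent := Fintype.ofFinite _
  set P1 : D.ConnectedComponent → Prop :=
    (fun K => ∃ v, v ∉ S ∧ D.connectedComponentMk v = K) with hP1def
  set Q : D.ConnectedComponent → Prop :=
    (fun K => ∃ v, D.connectedComponentMk v = K ∧ deg F v = 0) with hQdef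
  set A1 : Finset D.ConnectedComponent := Finset.univ.filter P1 with hA1def
  set B : Finset D.ConnectedComponent := Finset.univ.filter (fun K => ¬ P1 K) with hBdef
  set A2 : Finset D.ConnectedComponent := B.filter Q with hA2def
  set A3 : Finset D.ConnectedComponent := B.filter (fun K => ¬ Q K) with hA3def
  have h1 : A1.card + B.card = Finset.univ.card :=
    Finset.card_filter_add_card_filter_not (s := Finset.univ) (p := P1)
  have h2 : A2.card + A3.card = B.card :=
    Finset.card_filter_add_card_filter_not (s := B) (p := Q)
  have hsplit : numComponents D = A1.card + (A2.card + A3.card) := by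
    rw [numComponents, Nat.card_eq_fintype_card, ← Finset.card_univ, ← h1, h2]
  -- Bound 1
  have hb1 : A1.card ≤ numComponents (G.induce Sᶜ) := by
    have hchoice : ∀ K : {K // K ∈ A1}, ∃ v, v ∉ S ∧ D.connectedComponentMk v = K.1 :=
      fun K => (Finset.mem_filter.mp K.2).2
    choose f hf1 hf2 using hchoice
    have hg : Function.Injective
        (fun K : {K // K ∈ A1} =>
          (G.induce Sᶜ).connectedComponentMk ⟨f K, hf1 K⟩) := by
      intro K1 K2 h
      have hr : (G.induce Sᶜ).Reachable ⟨f K1, hf1 K1⟩ ⟨f K2, hf1 K2⟩ :=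
        ConnectedComponent.exact h
      have hφ : D.Reachable (f K1) (f K2) := by
        refine hr.map ⟨Subtype.val, ?_⟩
        intro a b hab
        exact ⟨hab, Or.inr ⟨a.2, b.2⟩⟩
      have hmk : D.connectedComponentMk (f K1) = D.connectedComponentMk (f K2) :=
        ConnectedComponent.sound hφ
      exact Subtype.ext ((hf2 K1).symm.trans (hmk.trans (hf2 K2)))
    calc A1.card = Nat.card {K // K ∈ A1} := by
          rw [Nat.card_eq_fintype_card, Fintype.card_coe]
      _ ≤ numComponents (G.induce Sᶜ) := Nat.card_le_card_of_injective _ hg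
  -- Bound 2
  have hb2 : A2.card ≤ {v ∈ S | deg F v = 0}.ncard := by
    have hchoice : ∀ K : {K // K ∈ A2}, ∃ v, D.connectedComponentMk v = K.1 ∧ deg F v = 0 :=
      fun K => (Finset.mem_filter.mp K.2).2
    choose f hf1 hf2 using hchoice
    have hfS : ∀ K : {K // K ∈ A2}, f K ∈ S := by
      intro K
      have hnP1 : ¬ P1 K.1 :=
        (Finset.mem_filter.mp (Finset.mem_filter.mp K.2).1).2
      by_contra hfs
      exact hnP1 ⟨f K, hfs, hf1 K⟩
    have hg : Function.Injective
        (fun K : {K // K ∈ A2} =>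
          (⟨f K, hfS K, hf2 K⟩ : {v ∈ S | deg F v = 0})) := by
      intro K1 K2 h
      have hval : f K1 = f K2 := congrArg Subtype.val h
      have h12 := hf1 K1
      rw [hval] at h12
      exact Subtype.ext (h12.symm.trans (hf1 K2))
    calc A2.card = Nat.card {K // K ∈ A2} := by
          rw [Nat.card_eq_fintype_card, Fintype.card_coe]
      _ ≤ Nat.card {v ∈ S | deg F v = 0} := Nat.card_le_card_of_injective _ hg
      _ = {v ∈ S | deg F v = 0}.ncard := Nat.card_coe_set_eq _
  -- Bound 3
  set t : D.ConnectedComponent → Finset (Sym2 V) :=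
    (fun K => (Set.toFinite {e ∈ F.edgeSet | ∀ x ∈ e, D.connectedComponentMk x = K}).toFinset)
    with htdef
  set T : Finset (Sym2 V) := (Set.toFinite {e ∈ F.edgeSet | ∀ x ∈ e, x ∈ S}).toFinset
    with hTdef
  have hTcard : T.card = edgesIn F S := by
    rw [hTdef, edgesIn, Set.ncard_eq_toFinset_card _ (Set.toFinite _)]
  have htsub : ∀ K ∈ A3, t K ⊆ T := by
    intro K hK e he
    rw [htdef, Set.Finite.mem_toFinset] at he
    rw [hTdef, Set.Finite.mem_toFinset]
    obtain ⟨heF, hmem⟩ := he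
    refine ⟨heF, fun x hx => ?_⟩
    have hnP1 : ¬ P1 K := (Finset.mem_filter.mp (Finset.mem_filter.mp hK).1).2
    by_contra hxS
    exact hnP1 ⟨x, hxS, hmem x hx⟩
  have hdisj : ∀ x ∈ A3, ∀ y ∈ A3, x ≠ y → Disjoint (t x) (t y) := by
    intro x _ y _ hxy
    rw [Finset.disjoint_left]
    intro e hex hey
    rw [htdef, Set.Finite.mem_toFinset] at hex hey
    induction e with
    | _ a b => exact hxy (((hex.2 a (by simp)).symm).trans (hey.2 a (by simp)))
  have hlow : ∀ K ∈ A3, c - 1 ≤ (t K).card := by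
    intro K hK
    obtain ⟨v, hv0⟩ := K.exists_rep
    have hv : D.connectedComponentMk v = K := hv0
    have hnQ : ¬ Q K := (Finset.mem_filter.mp hK).2
    have hdeg : deg F v ≠ 0 := fun h0 => hnQ ⟨v, hv, h0⟩
    obtain ⟨w, hw⟩ := Set.nonempty_of_ncard_ne_zero hdeg
    have hadj : F.Adj v w := hw
    have hcW := hcomp v w hadj
    have hedges := comp_card_eq_edges_add_one F hFa v
    have hsub : {e ∈ F.edgeSet | ∀ x ∈ e, F.Reachable v x} ⊆
        {e ∈ F.edgeSet | ∀ x ∈ e, D.connectedComponentMk x = K} := by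
      rintro e ⟨he, hr⟩
      refine ⟨he, fun x hx => ?_⟩
      have hDr : D.Reachable v x := (hr x hx).mono hFD
      rw [← hv]
      exact (ConnectedComponent.sound hDr).symm
    have hle : {e ∈ F.edgeSet | ∀ x ∈ e, F.Reachable v x}.ncard ≤ (t K).card := by
      rw [htdef, ← Set.ncard_eq_toFinset_card _ (Set.toFinite _)]
      exact Set.ncard_le_ncard hsub (Set.toFinite _)
    omega
  have hsum : (c - 1) * A3.card ≤ edgesIn F S := by
    calc (c - 1) * A3.card = A3.card • (c - 1) := by rw [smul_eq_mul, Nat.mul_comm]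
      _ ≤ ∑ K ∈ A3, (t K).card := Finset.card_nsmul_le_sum A3 _ _ hlow
      _ = (A3.biUnion t).card := (Finset.card_biUnion hdisj).symm
      _ ≤ T.card := Finset.card_le_card (Finset.biUnion_subset.mpr htsub)
      _ = edgesIn F S := hTcard
  -- Final arithmetic
  have hcpos : (0:ℝ) < (c:ℝ) - 1 := by
    have : (2:ℝ) ≤ (c:ℝ) := by exact_mod_cast hc
    linarith
  have e3 : (A3.card : ℝ) ≤ (edgesIn F S : ℝ) / ((c:ℝ) - 1) := by
    rw [le_div_iff₀ hcpos]
    have hcast : ((c - 1 : ℕ) : ℝ) = (c:ℝ) - 1 := by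
      have : 1 ≤ c := by omega
      push_cast [Nat.cast_sub this]
      ring
    calc (A3.card : ℝ) * ((c:ℝ) - 1) = ((c - 1 : ℕ) : ℝ) * (A3.card : ℝ) := by
          rw [hcast]; ring
      _ ≤ (edgesIn F S : ℝ) := by exact_mod_cast hsum
  have e1 : (A1.card : ℝ) ≤ (numComponents (G.induce Sᶜ) : ℝ) := by exact_mod_cast hb1
  have e2 : (A2.card : ℝ) ≤ ({v ∈ S | deg F v = 0}.ncard : ℝ) := by exact_mod_cast hb2
  have := hsplit
  rw [hsplit]
  push_cast
  linarith
end
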